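/- arXiv:2007.12924 — 2 statements merged into one kernel-verified Lean document; each statement's English description precedes it below -/
import Mathlib

section
/- Let (μ_k) and μ be Borel probability measures with finite first moment supported in the non-negative octant ℝⁿ₊. If μ_k converges weakly to μ and the first moments m(μ_k) converge to m(μ) in ℝⁿ, then Z(μ_k) converges to Z(μ) in the Hausdorff metric. -/
open MeasureTheory Pointwise Filter Topology

/-- The zonoid of a Borel measure on `ℝⁿ`. -/
noncomputable def zonoid {n : ℕ} (μ : Measure (EuclideanSpace ℝ (Fin n))) :
    Set (EuclideanSpace ℝ (Fin n)) :=
  {z | ∃ φ : EuclideanSpace ℝ (Fin n) → ℝ, Measurable φ ∧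
    (∀ x, φ x ∈ Set.Icc (0 : ℝ) 1) ∧ z = ∫ x, φ x • x ∂μ}

/-- The non-negative octant of `ℝⁿ`. -/
def octant (n : ℕ) : Set (EuclideanSpace ℝ (Fin n)) := {x | ∀ i, 0 ≤ x i}

/-!
The support function of `Z(μ)` is `h_μ(u) = ∫ ⟪u, x⟫⁺ dμ`, and the Hausdorff distance of two
closed convex sets is at most the supremum of `|h_K - h_L|` over the unit sphere. Since `⟪u, x⟫⁺`
is continuous and dominated by `‖u‖ ‖x‖`, weak convergence together with
`∫ ‖x‖ dμ_k → ∫ ‖x‖ dμ` gives `h_{μ_k} → h_μ` pointwise; on the octant `‖x‖ ≤ ⟪𝟙, x⟫`, so the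
latter convergence follows from that of the means by the same squeeze. Finally each `h_{μ_k}` is
Lipschitz with constant `∫ ‖x‖ dμ_k`, a bounded sequence, so by Arzelà–Ascoli the convergence is
uniform on the sphere.
-/

open scoped RealInnerProductSpace BoundedContinuousFunction

section WeakConvergence

variable {X : Type*} [TopologicalSpace X] [MeasurableSpace X]

def TendstoWeakly (μs : ℕ → Measure X) (μ : Measure X) : Prop :=
  ∀ f : X →ᵇ ℝ, Tendsto (fun k => ∫ x, f x ∂μs k) atTop (𝓝 (∫ x, f x ∂μ))

variable [OpensMeasurableSpace X] {μs : ℕ → Measure X} {μ : Measure X}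
  [∀ k, IsFiniteMeasure (μs k)]

lemma TendstoWeakly.eventually_lt_integral_of_nonneg (hweak : TendstoWeakly μs μ)
    {f : X → ℝ} (hf : Continuous f) (hfμ : Integrable f μ) (hfs : ∀ k, Integrable f (μs k))
    (hfs_nonneg : ∀ k, 0 ≤ᵐ[μs k] f) {a : ℝ} (ha : a < ∫ x, f x ∂μ) :
    ∀ᶠ k in atTop, a < ∫ x, f x ∂μs k := by
  -- the truncations `max (min f R) 0` are bounded continuous and increase to `max f 0 ≥ f`
  set t : ℕ → X → ℝ := fun R x => max (min (f x) R) 0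
  have ht_norm : ∀ R x, ‖t R x‖ = t R x := fun _ _ => Real.norm_of_nonneg (le_max_right _ _)
  have ht_lim : Tendsto (fun R => ∫ x, t R x ∂μ) atTop (𝓝 (∫ x, max (f x) 0 ∂μ)) := by
    refine tendsto_integral_of_dominated_convergence (fun x => ‖f x‖)
      (fun R => (by fun_prop : Continuous (t R)).aestronglyMeasurable) hfμ.norm
      (fun R => ae_of_all _ fun x => ?_) (ae_of_all _ fun x => ?_)
    · rw [ht_norm, Real.norm_eq_abs]
      exact max_le ((min_le_left _ _).trans (le_abs_self _)) (abs_nonneg _)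
    · refine tendsto_const_nhds.congr' ?_
      filter_upwards [eventually_ge_atTop ⌈f x⌉₊] with R hR
      simp only [t, min_eq_left ((Nat.le_ceil _).trans (Nat.cast_le.2 hR))]
  have hpos : a < ∫ x, max (f x) 0 ∂μ :=
    ha.trans_le (integral_mono hfμ hfμ.pos_part fun x => le_max_left _ _)
  obtain ⟨R, hR⟩ := (ht_lim.eventually (lt_mem_nhds hpos)).exists
  let tR : X →ᵇ ℝ := .ofNormedAddCommGroup (t R) (by fun_prop) R
    fun x => (ht_norm R x).trans_le (max_le (min_le_right _ _) R.cast_nonneg)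
  filter_upwards [(hweak tR).eventually (lt_mem_nhds hR)] with k hk
  exact hk.trans_le <| integral_mono_ae (tR.integrable _) (hfs k) <|
    (hfs_nonneg k).mono fun x hx => max_le (min_le_left _ _) hx

lemma TendstoWeakly.tendsto_integral_of_nonneg_of_le (hweak : TendstoWeakly μs μ)
    {f g : X → ℝ} (hf : Continuous f) (hg : Continuous g)
    (hfμ : Integrable f μ) (hgμ : Integrable g μ)
    (hfs : ∀ k, Integrable f (μs k)) (hgs : ∀ k, Integrable g (μs k))
    (hfs_nonneg : ∀ k, 0 ≤ᵐ[μs k] f) (hfs_le : ∀ k, f ≤ᵐ[μs k] g)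
    (hg_lim : Tendsto (fun k => ∫ x, g x ∂μs k) atTop (𝓝 (∫ x, g x ∂μ))) :
    Tendsto (fun k => ∫ x, f x ∂μs k) atTop (𝓝 (∫ x, f x ∂μ)) := by
  refine tendsto_order.2
    ⟨fun a ha => hweak.eventually_lt_integral_of_nonneg hf hfμ hfs hfs_nonneg ha, fun b hb => ?_⟩
  -- the upper bound comes from the lower bound for `g - f` and the convergence of `∫ g`
  set d := b - ∫ x, f x ∂μ
  have hgf : ∀ᶠ k in atTop, ∫ x, (g - f) x ∂μ - d / 2 < ∫ x, (g - f) x ∂μs k :=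
    hweak.eventually_lt_integral_of_nonneg (hg.sub hf) (hgμ.sub hfμ)
      (fun k => (hgs k).sub (hfs k)) (fun k => (hfs_le k).mono fun x hx => sub_nonneg.2 hx)
      (by linarith)
  have hg' : ∀ᶠ k in atTop, ∫ x, g x ∂μs k < ∫ x, g x ∂μ + d / 2 :=
    hg_lim.eventually (gt_mem_nhds (by linarith))
  filter_upwards [hgf, hg'] with k hgf hg'
  rw [Pi.sub_def, integral_sub hgμ hfμ, integral_sub (hgs k) (hfs k)] at hgf
  linarith

end WeakConvergence

section SupportFunction

variable {F : Type*} [NormedAddCommGroup F] [InnerProductSpace ℝ F]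

lemma abs_max_inner_zero_le (u x : F) : |max ⟪u, x⟫ 0| ≤ ‖u‖ * ‖x‖ := by
  rw [abs_of_nonneg (le_max_right _ _)]
  exact max_le (real_inner_le_norm u x) (by positivity)

variable [MeasurableSpace F] [OpensMeasurableSpace F]

noncomputable def zonoidSupport (μ : Measure F) (u : F) : ℝ := ∫ x, max ⟪u, x⟫ 0 ∂μ

lemma integrable_max_inner_zero {μ : Measure F} (hμ : Integrable (fun x => x) μ) (u : F) :
    Integrable (fun x => max ⟪u, x⟫ 0) μ :=
  (hμ.norm.const_mul ‖u‖).mono' (by fun_prop) (ae_of_all _ (abs_max_inner_zero_le u))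

lemma dist_zonoidSupport_le {μ : Measure F} (hμ : Integrable (fun x => x) μ) (u v : F) :
    dist (zonoidSupport μ u) (zonoidSupport μ v) ≤ (∫ x, ‖x‖ ∂μ) * dist u v := by
  rw [Real.dist_eq, dist_eq_norm, zonoidSupport, zonoidSupport,
    ← integral_sub (integrable_max_inner_zero hμ u) (integrable_max_inner_zero hμ v),
    ← Real.norm_eq_abs, mul_comm, ← integral_const_mul]
  refine norm_integral_le_of_norm_le (hμ.norm.const_mul _) (ae_of_all _ fun x => ?_)
  calc ‖max ⟪u, x⟫ 0 - max ⟪v, x⟫ 0‖ ≤ |⟪u, x⟫ - ⟪v, x⟫| :=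
        abs_max_sub_max_le_abs _ _ _
    _ = |⟪u - v, x⟫| := by rw [inner_sub_left]
    _ ≤ ‖u - v‖ * ‖x‖ := abs_real_inner_le_norm _ _

variable {μs : ℕ → Measure F} {μ : Measure F} [∀ k, IsFiniteMeasure (μs k)]

lemma tendsto_zonoidSupport (hweak : TendstoWeakly μs μ)
    (hμs : ∀ k, Integrable (fun x => x) (μs k)) (hμ : Integrable (fun x => x) μ)
    (hnorm : Tendsto (fun k => ∫ x, ‖x‖ ∂μs k) atTop (𝓝 (∫ x, ‖x‖ ∂μ))) (u : F) :
    Tendsto (fun k => zonoidSupport (μs k) u) atTop (𝓝 (zonoidSupport μ u)) := by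
  refine hweak.tendsto_integral_of_nonneg_of_le (g := fun x => ‖u‖ * ‖x‖) (by fun_prop)
    (by fun_prop) (integrable_max_inner_zero hμ u) (hμ.norm.const_mul _)
    (fun k => integrable_max_inner_zero (hμs k) u) (fun k => (hμs k).norm.const_mul _)
    (fun k => ae_of_all _ fun x => le_max_right _ _)
    (fun k => ae_of_all _ fun x => (le_abs_self _).trans (abs_max_inner_zero_le u x)) ?_
  simp only [integral_const_mul]
  exact hnorm.const_mul _

lemma tendstoUniformly_zonoidSupport_sphere [ProperSpace F] (hweak : TendstoWeakly μs μ)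
    (hμs : ∀ k, Integrable (fun x => x) (μs k)) (hμ : Integrable (fun x => x) μ)
    (hnorm : Tendsto (fun k => ∫ x, ‖x‖ ∂μs k) atTop (𝓝 (∫ x, ‖x‖ ∂μ))) :
    TendstoUniformly (fun k (v : Metric.sphere (0 : F) 1) => zonoidSupport (μs k) v)
      (fun v => zonoidSupport μ v) atTop := by
  have : CompactSpace (Metric.sphere (0 : F) 1) :=
    isCompact_iff_compactSpace.1 (isCompact_sphere 0 1)
  obtain ⟨C, hC⟩ := hnorm.bddAbove_range
  have hlip : ∀ k, LipschitzWith C.toNNReal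
      fun v : Metric.sphere (0 : F) 1 => zonoidSupport (μs k) v :=
    fun k => LipschitzWith.of_dist_le_mul fun u v =>
      (dist_zonoidSupport_le (hμs k) u v).trans <|
        mul_le_mul_of_nonneg_right ((hC ⟨k, rfl⟩).trans (Real.le_coe_toNNReal C)) dist_nonneg
  exact UniformFun.tendsto_iff_tendstoUniformly.1 <|
    ((LipschitzWith.uniformEquicontinuous _ _ hlip).equicontinuous.tendsto_uniformFun_iff_pi _ _).2
      (tendsto_pi_nhds.2 fun v => tendsto_zonoidSupport hweak hμs hμ hnorm v)

end SupportFunction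

lemma Metric.infDist_le_of_forall_inner_le {F : Type*} [NormedAddCommGroup F]
    [InnerProductSpace ℝ F] {K : Set F} (hK : IsComplete K) (hKconv : Convex ℝ K)
    (hKne : K.Nonempty) {z : F} {ε : ℝ} (hε : 0 ≤ ε)
    (h : ∀ v ∈ Metric.sphere (0 : F) 1, ∃ y ∈ K, ⟪v, z⟫ ≤ ⟪v, y⟫ + ε) :
    Metric.infDist z K ≤ ε := by
  -- test `h` on the unit vector pointing from the nearest point `p` of `K` to `z`
  obtain ⟨p, hpK, hp⟩ := exists_norm_eq_iInf_of_complete_convex hKne hK hKconv z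
  have hp_inner := (norm_eq_iInf_iff_real_inner_le_zero hKconv hpK).1 hp
  refine (Metric.infDist_le_dist_of_mem hpK).trans ?_
  rw [dist_eq_norm]
  rcases eq_or_ne (z - p) 0 with hzp | hzp
  · rw [hzp, norm_zero]; exact hε
  set v := ‖z - p‖⁻¹ • (z - p)
  have hv : v ∈ Metric.sphere (0 : F) 1 := by
    simp [v, norm_smul, norm_ne_zero_iff.2 hzp]
  obtain ⟨y, hyK, hy⟩ := h v hv
  have hvzp : ⟪v, z - p⟫ = ‖z - p‖ := by
    rw [real_inner_smul_left, real_inner_self_eq_norm_sq]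
    field_simp [norm_ne_zero_iff.2 hzp]
  have hvyp : ⟪v, y - p⟫ ≤ 0 := by
    rw [real_inner_smul_left]
    exact mul_nonpos_of_nonneg_of_nonpos (by positivity) (hp_inner y hyK)
  rw [inner_sub_right] at hvzp hvyp
  linarith

section Zonoid

variable {n : ℕ}

local notation "E" => EuclideanSpace ℝ (Fin n)

lemma integrable_smul_of_mem_Icc {μ : Measure E} (hμ : Integrable (fun x => x) μ)
    {φ : E → ℝ} (hφ : Measurable φ) (hφ01 : ∀ x, φ x ∈ Set.Icc (0 : ℝ) 1) :
    Integrable (fun x => φ x • x) μ := by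
  refine hμ.mono (hφ.aestronglyMeasurable.smul aestronglyMeasurable_id) (ae_of_all _ fun x => ?_)
  rw [norm_smul, Real.norm_eq_abs, abs_of_nonneg (hφ01 x).1]
  exact mul_le_of_le_one_left (norm_nonneg x) (hφ01 x).2

lemma inner_le_zonoidSupport {μ : Measure E} (hμ : Integrable (fun x => x) μ) {z : E}
    (hz : z ∈ zonoid μ) (u : E) : ⟪u, z⟫ ≤ zonoidSupport μ u := by
  obtain ⟨φ, hφ, hφ01, rfl⟩ := hz
  have hφx := integrable_smul_of_mem_Icc hμ hφ hφ01
  rw [← integral_inner hφx u]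
  refine integral_mono (hφx.const_inner u) (integrable_max_inner_zero hμ u) fun x => ?_
  rw [real_inner_smul_right]
  rcases le_total ⟪u, x⟫ 0 with hux | hux
  · exact (mul_nonpos_of_nonneg_of_nonpos (hφ01 x).1 hux).trans (le_max_right _ _)
  · exact (mul_le_of_le_one_left hux (hφ01 x).2).trans (le_max_left _ _)

lemma exists_mem_zonoid_inner_eq {μ : Measure E} (hμ : Integrable (fun x => x) μ) (u : E) :
    ∃ z ∈ zonoid μ, ⟪u, z⟫ = zonoidSupport μ u := by
  classical
  set φ : E → ℝ := {x | 0 < ⟪u, x⟫}.indicator 1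
  have hφ : Measurable φ :=
    measurable_one.indicator (measurableSet_lt measurable_const (by fun_prop))
  have hφ01 : ∀ x, φ x ∈ Set.Icc (0 : ℝ) 1 := fun x => by
    by_cases hx : 0 < ⟪u, x⟫ <;> simp [φ, hx]
  refine ⟨_, ⟨φ, hφ, hφ01, rfl⟩, ?_⟩
  rw [← integral_inner (integrable_smul_of_mem_Icc hμ hφ hφ01) u]
  refine integral_congr_ae (ae_of_all _ fun x => ?_)
  by_cases hx : 0 < ⟪u, x⟫
  · simp [φ, hx, hx.le]
  · simp [φ, hx, not_lt.1 hx]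

lemma convex_zonoid {μ : Measure E} (hμ : Integrable (fun x => x) μ) :
    Convex ℝ (zonoid μ) := by
  rintro _ ⟨φ, hφ, hφ01, rfl⟩ _ ⟨ψ, hψ, hψ01, rfl⟩ a b ha hb hab
  refine ⟨fun x => a * φ x + b * ψ x, by fun_prop, fun x => ⟨?_, ?_⟩, ?_⟩
  · have := (hφ01 x).1; have := (hψ01 x).1; positivity
  · nlinarith [(hφ01 x).1, (hφ01 x).2, (hψ01 x).1, (hψ01 x).2]
  · have hφa : Integrable (fun x => a • φ x • x) μ :=
      (integrable_smul_of_mem_Icc hμ hφ hφ01).smul a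
    have hψb : Integrable (fun x => b • ψ x • x) μ :=
      (integrable_smul_of_mem_Icc hμ hψ hψ01).smul b
    rw [← integral_smul, ← integral_smul, ← integral_add hφa hψb]
    simp only [add_smul, smul_smul]

lemma infDist_zonoid_le {μ ν : Measure E} (hμ : Integrable (fun x => x) μ)
    (hν : Integrable (fun x => x) ν) {ε : ℝ} (hε : 0 ≤ ε)
    (h : ∀ v ∈ Metric.sphere (0 : E) 1, zonoidSupport μ v ≤ zonoidSupport ν v + ε) {z : E}
    (hz : z ∈ zonoid μ) : Metric.infDist z (zonoid ν) ≤ ε := by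
  obtain ⟨y₀, hy₀, -⟩ := exists_mem_zonoid_inner_eq hν 0
  rw [← Metric.infDist_closure]
  refine Metric.infDist_le_of_forall_inner_le isClosed_closure.isComplete
    (convex_zonoid hν).closure ⟨y₀, subset_closure hy₀⟩ hε fun v hv => ?_
  obtain ⟨y, hy, hvy⟩ := exists_mem_zonoid_inner_eq hν v
  exact ⟨y, subset_closure hy, hvy ▸ (inner_le_zonoidSupport hμ hz v).trans (h v hv)⟩

lemma hausdorffDist_zonoid_le {μ ν : Measure E} (hμ : Integrable (fun x => x) μ)
    (hν : Integrable (fun x => x) ν) {ε : ℝ} (hε : 0 ≤ ε)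
    (h : ∀ v ∈ Metric.sphere (0 : E) 1, |zonoidSupport μ v - zonoidSupport ν v| ≤ ε) :
    Metric.hausdorffDist (zonoid μ) (zonoid ν) ≤ ε :=
  Metric.hausdorffDist_le_of_infDist hε
    (fun _ hz => infDist_zonoid_le hμ hν hε (fun v hv => by linarith [abs_le.1 (h v hv)]) hz)
    (fun _ hz => infDist_zonoid_le hν hμ hε (fun v hv => by linarith [abs_le.1 (h v hv)]) hz)

end Zonoid

lemma norm_le_sum_of_mem_octant {n : ℕ} {x : EuclideanSpace ℝ (Fin n)} (hx : x ∈ octant n) :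
    ‖x‖ ≤ ∑ i, x i := by
  refine (pow_le_pow_iff_left₀ (norm_nonneg x) (Finset.sum_nonneg fun i _ => hx i)
    two_ne_zero).1 ?_
  rw [EuclideanSpace.real_norm_sq_eq]
  exact Finset.sum_sq_le_sq_sum_of_nonneg fun i _ => hx i

lemma tendsto_integral_norm_of_octant {n : ℕ} {μs : ℕ → Measure (EuclideanSpace ℝ (Fin n))}
    {μ : Measure (EuclideanSpace ℝ (Fin n))} [∀ k, IsFiniteMeasure (μs k)]
    (hweak : TendstoWeakly μs μ) (hμs : ∀ k, Integrable (fun x => x) (μs k)) (hμ : Integrable (fun x => x) μ)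
    (hsupp : ∀ k, μs k (octant n)ᶜ = 0)
    (hmean : Tendsto (fun k => ∫ x, x ∂μs k) atTop (𝓝 (∫ x, x ∂μ))) :
    Tendsto (fun k => ∫ x, ‖x‖ ∂μs k) atTop (𝓝 (∫ x, ‖x‖ ∂μ)) := by
  set w : EuclideanSpace ℝ (Fin n) := WithLp.toLp 2 fun _ => 1
  have hw : ∀ x ∈ octant n, ‖x‖ ≤ ⟪w, x⟫ := fun x hx => by
    simpa [w, PiLp.inner_apply] using norm_le_sum_of_mem_octant hx
  refine hweak.tendsto_integral_of_nonneg_of_le continuous_norm (by fun_prop) hμ.norm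
    (hμ.const_inner w) (fun k => (hμs k).norm) (fun k => (hμs k).const_inner w)
    (fun k => ae_of_all _ fun x => norm_nonneg x)
    (fun k => mem_of_superset (mem_ae_iff.2 (hsupp k)) hw) ?_
  simp only [integral_inner hμ, integral_inner (hμs _)]
  exact tendsto_const_nhds.inner hmean

theorem zonoid_mean_continuity_general {n : ℕ} (μk : ℕ → Measure (EuclideanSpace ℝ (Fin n)))
    (μ : Measure (EuclideanSpace ℝ (Fin n)))
    [∀ k, IsProbabilityMeasure (μk k)]
    (hint : ∀ k, Integrable (fun x => x) (μk k)) (hμ : Integrable (fun x => x) μ)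
    (hsupp : ∀ k, μk k (octant n)ᶜ = 0)
    (hweak : ∀ f : BoundedContinuousFunction (EuclideanSpace ℝ (Fin n)) ℝ,
      Tendsto (fun k => ∫ x, f x ∂(μk k)) atTop (𝓝 (∫ x, f x ∂μ)))
    (hmean : Tendsto (fun k => ∫ x, x ∂(μk k)) atTop (𝓝 (∫ x, x ∂μ))) :
    Tendsto (fun k => Metric.hausdorffDist (zonoid (μk k)) (zonoid μ)) atTop (𝓝 0) := by
  have hnorm := tendsto_integral_norm_of_octant hweak hint hμ hsupp hmean
  have hunif := tendstoUniformly_zonoidSupport_sphere hweak hint hμ hnorm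
  refine Metric.tendsto_nhds.2 fun ε hε => ?_
  filter_upwards [Metric.tendstoUniformly_iff.1 hunif (ε / 2) (half_pos hε)] with k hk
  rw [Real.dist_eq, sub_zero, abs_of_nonneg Metric.hausdorffDist_nonneg]
  refine (hausdorffDist_zonoid_le (hint k) hμ (half_pos hε).le fun v hv => ?_).trans_lt
    (half_lt_self hε)
  simpa [Real.dist_eq, abs_sub_comm] using (hk ⟨v, hv⟩).le

theorem zonoid_mean_continuity {n : ℕ} (μk : ℕ → Measure (EuclideanSpace ℝ (Fin n)))
    (μ : Measure (EuclideanSpace ℝ (Fin n)))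
    [∀ k, IsProbabilityMeasure (μk k)] [IsProbabilityMeasure μ]
    (hint : ∀ k, Integrable (fun x => x) (μk k)) (hμ : Integrable (fun x => x) μ)
    (hsupp : ∀ k, μk k (octant n)ᶜ = 0) (hsuppμ : μ (octant n)ᶜ = 0)
    (hweak : ∀ f : BoundedContinuousFunction (EuclideanSpace ℝ (Fin n)) ℝ,
      Tendsto (fun k => ∫ x, f x ∂(μk k)) atTop (𝓝 (∫ x, f x ∂μ)))
    (hmean : Tendsto (fun k => ∫ x, x ∂(μk k)) atTop (𝓝 (∫ x, x ∂μ))) :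
    Tendsto (fun k => Metric.hausdorffDist (zonoid (μk k)) (zonoid μ)) atTop (𝓝 0) :=
  zonoid_mean_continuity_general μk μ hint hμ hsupp hweak hmean
end

section
/- Let X₁, X₂, … be independent ℝⁿ₊-valued random variables with common distribution μ having finite first moment, and let μ̂_N = (1/N) Σ_{i=1}^N δ_{X_i} be the empirical measures. Then the empirical zonoids Z(μ̂_N) converge to Z(μ) in the Hausdorff metric with probability 1. -/
/-!
The support function of `Z(ν)` is `u ↦ ∫ ⟪u, x⟫⁺ dν`, and the Hausdorff distance of two convex
sets is bounded by the sup-distance of their support functions on the unit ball. By the strong law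
of large numbers, almost surely the empirical support functions converge on a countable dense set
of directions, and the empirical first moments `∫ ‖x‖ dμ̂_N` converge; the latter bound the
Lipschitz constants of the empirical support functions, so the convergence is uniform on the unit
ball.
-/

open MeasureTheory Pointwise Filter Topology ProbabilityTheory

/-- The empirical measure of the first `N` samples. -/
noncomputable def empiricalMeasure {n : ℕ} (x : ℕ → EuclideanSpace ℝ (Fin n)) (N : ℕ) :
    Measure (EuclideanSpace ℝ (Fin n)) :=
  ((N : ENNReal))⁻¹ • ∑ i ∈ Finset.range N, Measure.dirac (x i)

open scoped RealInnerProductSpace NNReal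

theorem infDist_le_of_forall_exists_inner_le {E : Type*} [NormedAddCommGroup E]
    [InnerProductSpace ℝ E] [CompleteSpace E] {B : Set E} (hB : Convex ℝ B) (hBne : B.Nonempty)
    {z : E} {ε : ℝ} (hε : 0 ≤ ε) (h : ∀ u, ∃ b ∈ B, ⟪u, z⟫ ≤ ⟪u, b⟫ + ε * ‖u‖) :
    Metric.infDist z B ≤ ε := by
  obtain ⟨v, hv, hv_min⟩ := exists_norm_eq_iInf_of_complete_convex hBne.closure
    isClosed_closure.isComplete hB.closure z
  have hsep := (norm_eq_iInf_iff_real_inner_le_zero hB.closure hv).1 hv_min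
  -- test the hypothesis in the direction from the nearest point `v` of `closure B` to `z`
  obtain ⟨b, hb, hzb⟩ := h (z - v)
  have hbv : ⟪z - v, b - v⟫ ≤ 0 := hsep b (subset_closure hb)
  have hsq : ‖z - v‖ ^ 2 ≤ ε * ‖z - v‖ := by
    rw [← real_inner_self_eq_norm_sq, inner_sub_right]
    rw [inner_sub_right] at hbv
    linarith
  have hzv : ‖z - v‖ ≤ ε := by nlinarith [norm_nonneg (z - v)]
  calc Metric.infDist z B = Metric.infDist z (closure B) := Metric.infDist_closure.symm
    _ ≤ dist z v := Metric.infDist_le_dist_of_mem hv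
    _ ≤ ε := by rwa [dist_eq_norm]

theorem tendstoUniformlyOn_of_lipschitzWith_of_tendsto_dense {ι α β : Type*}
    [PseudoMetricSpace α] [PseudoMetricSpace β] {l : Filter ι} {F : ι → α → β} {f : α → β}
    {K D : Set α} (hK : IsCompact K) (hD : Dense D) {C : ℝ≥0}
    (hF : ∀ᶠ i in l, LipschitzWith C (F i)) (hf : LipschitzWith C f)
    (hFD : ∀ d ∈ D, Tendsto (fun i => F i d) l (𝓝 (f d))) :
    TendstoUniformlyOn F f l K := by
  rw [Metric.tendstoUniformlyOn_iff]
  intro ε hε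
  set δ := ε / (3 * (C + 1)) with hδ_def
  have hδ : 0 < δ := by positivity
  have hcover : K ⊆ ⋃ d ∈ D, Metric.ball d δ := fun u _ =>
    let ⟨d, hdD, hud⟩ := hD.exists_dist_lt u hδ
    Set.mem_biUnion hdD hud
  obtain ⟨t, htD, ht, hKt⟩ := hK.elim_finite_subcover_image (fun _ _ => Metric.isOpen_ball) hcover
  have hFt : ∀ᶠ i in l, ∀ d ∈ t, dist (f d) (F i d) < ε / 3 :=
    ht.eventually_all.2 fun d hd => ((hFD d (htD hd)).eventually
      (Metric.ball_mem_nhds (f d) (by positivity : (0 : ℝ) < ε / 3))).mono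
        fun _ h => by rwa [dist_comm]
  filter_upwards [hF, hFt] with i hFi hFti u hu
  obtain ⟨d, hdt, hud⟩ := Set.mem_iUnion₂.1 (hKt hu)
  have hCδ : C * δ < ε / 3 := by
    rw [hδ_def, mul_div_assoc', div_lt_div_iff₀ (by positivity) (by norm_num)]
    nlinarith [C.2]
  calc dist (f u) (F i u) ≤ dist (f u) (f d) + dist (f d) (F i d) + dist (F i d) (F i u) :=
        dist_triangle4 _ _ _ _
    _ ≤ C * dist u d + dist (f d) (F i d) + C * dist d u := by
        gcongr
        exacts [hf.dist_le_mul u d, hFi.dist_le_mul d u]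
    _ < ε / 3 + ε / 3 + ε / 3 := by
        rw [dist_comm d u]
        have : (C : ℝ) * dist u d ≤ C * δ := by gcongr; exact (Metric.mem_ball.1 hud).le
        linarith [hFti d hdt]
    _ = ε := by ring

section SupportFunction

variable {E : Type*} [NormedAddCommGroup E] [InnerProductSpace ℝ E] [MeasurableSpace E]
  {ν : Measure E}

noncomputable def zonoidSupportFun (ν : Measure E) (u : E) : ℝ :=
  ∫ x, max ⟪u, x⟫ 0 ∂ν

theorem zonoidSupportFun_smul {c : ℝ} (hc : 0 ≤ c) (u : E) :
    zonoidSupportFun ν (c • u) = c * zonoidSupportFun ν u := by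
  simp only [zonoidSupportFun, ← integral_const_mul, real_inner_smul_left,
    mul_max_of_nonneg _ _ hc, mul_zero]

theorem lipschitzWith_zonoidSupportFun (hν : Integrable (fun x => x) ν) :
    LipschitzWith (Real.toNNReal (∫ x, ‖x‖ ∂ν)) (zonoidSupportFun ν) := by
  refine LipschitzWith.of_dist_le_mul fun u v => ?_
  rw [Real.coe_toNNReal _ (integral_nonneg fun x => norm_nonneg x), Real.dist_eq, dist_eq_norm,
    zonoidSupportFun, zonoidSupportFun,
    ← integral_sub (hν.const_inner u).pos_part (hν.const_inner v).pos_part, mul_comm,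
    ← integral_const_mul]
  refine (abs_integral_le_integral_abs).trans (integral_mono_of_nonneg
    (ae_of_all _ fun x => abs_nonneg _) (hν.norm.const_mul _) (ae_of_all _ fun x => ?_))
  calc |max ⟪u, x⟫ 0 - max ⟪v, x⟫ 0| ≤ |⟪u, x⟫ - ⟪v, x⟫| := abs_max_sub_max_le_abs _ _ _
    _ = |⟪u - v, x⟫| := by rw [inner_sub_left]
    _ ≤ ‖u - v‖ * ‖x‖ := abs_real_inner_le_norm _ _

theorem abs_sub_zonoidSupportFun_le_mul_norm {ν₁ ν₂ : Measure E} {ε : ℝ}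
    (h : ∀ u ∈ Metric.closedBall (0 : E) 1,
      |zonoidSupportFun ν₁ u - zonoidSupportFun ν₂ u| ≤ ε) (u : E) :
    |zonoidSupportFun ν₁ u - zonoidSupportFun ν₂ u| ≤ ε * ‖u‖ := by
  rcases eq_or_ne u 0 with rfl | hu
  · simp [zonoidSupportFun]
  have hw : ‖u‖⁻¹ • u ∈ Metric.closedBall (0 : E) 1 := by
    rw [mem_closedBall_zero_iff, norm_smul, norm_inv, norm_norm,
      inv_mul_cancel₀ (norm_ne_zero_iff.2 hu)]
  have hscale (ν : Measure E) : zonoidSupportFun ν u = ‖u‖ * zonoidSupportFun ν (‖u‖⁻¹ • u) := by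
    rw [← zonoidSupportFun_smul (norm_nonneg u), smul_inv_smul₀ (norm_ne_zero_iff.2 hu)]
  rw [hscale, hscale, ← mul_sub, abs_mul, abs_norm, mul_comm]
  exact mul_le_mul_of_nonneg_right (h _ hw) (norm_nonneg u)

end SupportFunction

section Zonoid

variable {n : ℕ} {ν ν₁ ν₂ : Measure (EuclideanSpace ℝ (Fin n))}

theorem integrable_smul_self_of_mem_Icc (hν : Integrable (fun x => x) ν)
    {φ : EuclideanSpace ℝ (Fin n) → ℝ} (hφm : Measurable φ) (hφ : ∀ x, φ x ∈ Set.Icc (0 : ℝ) 1) :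
    Integrable (fun x => φ x • x) ν :=
  hν.bdd_smul 1 hφm.aestronglyMeasurable (ae_of_all _ fun x => by
    rw [Real.norm_of_nonneg (hφ x).1]; exact (hφ x).2)

theorem zonoid_nonempty (ν : Measure (EuclideanSpace ℝ (Fin n))) : (zonoid ν).Nonempty :=
  ⟨0, fun _ => 0, measurable_const, fun _ => ⟨le_rfl, zero_le_one⟩, by simp⟩

theorem convex_zonoid_s11 (hν : Integrable (fun x => x) ν) : Convex ℝ (zonoid ν) := by
  rintro _ ⟨φ, hφm, hφ, rfl⟩ _ ⟨ψ, hψm, hψ, rfl⟩ a b ha hb hab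
  refine ⟨fun x => a * φ x + b * ψ x, (hφm.const_mul a).add (hψm.const_mul b),
    fun x => ⟨?_, ?_⟩, ?_⟩
  · nlinarith [(hφ x).1, (hψ x).1]
  · nlinarith [(hφ x).2, (hψ x).2]
  · simp only [add_smul, mul_smul]
    rw [integral_add (f := fun x => a • φ x • x) (g := fun x => b • ψ x • x)
      ((integrable_smul_self_of_mem_Icc hν hφm hφ).smul a)
      ((integrable_smul_self_of_mem_Icc hν hψm hψ).smul b), integral_smul, integral_smul]

theorem inner_le_zonoidSupportFun (hν : Integrable (fun x => x) ν)
    {z : EuclideanSpace ℝ (Fin n)} (hz : z ∈ zonoid ν) (u : EuclideanSpace ℝ (Fin n)) :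
    ⟪u, z⟫ ≤ zonoidSupportFun ν u := by
  obtain ⟨φ, hφm, hφ, rfl⟩ := hz
  have hint := integrable_smul_self_of_mem_Icc hν hφm hφ
  rw [← integral_inner hint]
  refine integral_mono (hint.const_inner u) (hν.const_inner u).pos_part fun x => ?_
  rw [real_inner_smul_right]
  calc φ x * ⟪u, x⟫ ≤ φ x * max ⟪u, x⟫ 0 := mul_le_mul_of_nonneg_left (le_max_left _ _) (hφ x).1
    _ ≤ max ⟪u, x⟫ 0 := mul_le_of_le_one_left (le_max_right _ _) (hφ x).2

theorem exists_mem_zonoid_inner_eq_s11 (hν : Integrable (fun x => x) ν)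
    (u : EuclideanSpace ℝ (Fin n)) : ∃ z ∈ zonoid ν, ⟪u, z⟫ = zonoidSupportFun ν u := by
  set φ := {x : EuclideanSpace ℝ (Fin n) | 0 < ⟪u, x⟫}.indicator fun _ => (1 : ℝ)
  have hφm : Measurable φ := measurable_const.indicator
    (measurableSet_lt measurable_const (continuous_const.inner continuous_id).measurable)
  have hφ (x) : φ x ∈ Set.Icc (0 : ℝ) 1 := by
    by_cases hx : 0 < ⟪u, x⟫ <;> simp [φ, hx]
  refine ⟨_, ⟨φ, hφm, hφ, rfl⟩, ?_⟩
  rw [← integral_inner (integrable_smul_self_of_mem_Icc hν hφm hφ)]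
  refine integral_congr_ae (ae_of_all _ fun x => ?_)
  change ⟪u, φ x • x⟫ = max ⟪u, x⟫ 0
  rw [real_inner_smul_right]
  by_cases hx : 0 < ⟪u, x⟫
  · simp [φ, hx, hx.le]
  · simp [φ, hx, not_lt.1 hx]

theorem hausdorffDist_zonoid_le_s11 (hν₁ : Integrable (fun x => x) ν₁)
    (hν₂ : Integrable (fun x => x) ν₂) {ε : ℝ} (hε : 0 ≤ ε)
    (h : ∀ u, |zonoidSupportFun ν₁ u - zonoidSupportFun ν₂ u| ≤ ε * ‖u‖) :
    Metric.hausdorffDist (zonoid ν₁) (zonoid ν₂) ≤ ε := by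
  have key {ν ν' : Measure (EuclideanSpace ℝ (Fin n))} (hν : Integrable (fun x => x) ν)
      (hν' : Integrable (fun x => x) ν')
      (h : ∀ u, zonoidSupportFun ν u ≤ zonoidSupportFun ν' u + ε * ‖u‖) :
      ∀ z ∈ zonoid ν, Metric.infDist z (zonoid ν') ≤ ε := fun z hz =>
    infDist_le_of_forall_exists_inner_le (convex_zonoid_s11 hν') (zonoid_nonempty ν') hε fun u =>
      let ⟨b, hb, hbu⟩ := exists_mem_zonoid_inner_eq_s11 hν' u
      ⟨b, hb, hbu ▸ (inner_le_zonoidSupportFun hν hz u).trans (h u)⟩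
  exact Metric.hausdorffDist_le_of_infDist hε
    (key hν₁ hν₂ fun u => by linarith [(abs_sub_le_iff.1 (h u)).1])
    (key hν₂ hν₁ fun u => by linarith [(abs_sub_le_iff.1 (h u)).2])

end Zonoid

theorem tendsto_hausdorffDist_zonoid_of_tendsto_dense {n : ℕ} {ι : Type*} {l : Filter ι}
    {ν : ι → Measure (EuclideanSpace ℝ (Fin n))} {ν₀ : Measure (EuclideanSpace ℝ (Fin n))}
    (hν : ∀ i, Integrable (fun x => x) (ν i)) (hν₀ : Integrable (fun x => x) ν₀)
    {D : Set (EuclideanSpace ℝ (Fin n))} (hD : Dense D)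
    (hsupportFun : ∀ d ∈ D,
      Tendsto (fun i => zonoidSupportFun (ν i) d) l (𝓝 (zonoidSupportFun ν₀ d)))
    (hnorm : Tendsto (fun i => ∫ x, ‖x‖ ∂ν i) l (𝓝 (∫ x, ‖x‖ ∂ν₀))) :
    Tendsto (fun i => Metric.hausdorffDist (zonoid (ν i)) (zonoid ν₀)) l (𝓝 0) := by
  set C := Real.toNNReal (∫ x, ‖x‖ ∂ν₀) + 1
  have hlip : ∀ᶠ i in l, LipschitzWith C (zonoidSupportFun (ν i)) :=
    ((tendsto_real_toNNReal hnorm).eventually (eventually_lt_nhds (lt_add_one _))).mono fun i hi =>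
      (lipschitzWith_zonoidSupportFun (hν i)).weaken hi.le
  have hunif := tendstoUniformlyOn_of_lipschitzWith_of_tendsto_dense
    (isCompact_closedBall 0 1) hD hlip
    ((lipschitzWith_zonoidSupportFun hν₀).weaken (le_add_of_nonneg_right zero_le_one)) hsupportFun
  refine Metric.tendsto_nhds.2 fun ε hε => ?_
  filter_upwards [Metric.tendstoUniformlyOn_iff.1 hunif (ε / 2) (half_pos hε)] with i hi
  have hdist := hausdorffDist_zonoid_le_s11 (hν i) hν₀ (half_pos hε).le
    (abs_sub_zonoidSupportFun_le_mul_norm fun u hu => by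
      rw [abs_sub_comm, ← Real.dist_eq]; exact (hi u hu).le)
  rw [Real.dist_0_eq_abs, abs_of_nonneg Metric.hausdorffDist_nonneg]
  linarith

section Empirical

variable {n : ℕ} {F : Type*} [NormedAddCommGroup F]

theorem integrable_empiricalMeasure (g : EuclideanSpace ℝ (Fin n) → F)
    (x : ℕ → EuclideanSpace ℝ (Fin n)) (N : ℕ) : Integrable g (empiricalMeasure x N) := by
  rcases N.eq_zero_or_pos with rfl | hN
  · simp [empiricalMeasure]
  · exact (integrable_finsetSum_measure.2 fun i _ => integrable_dirac enorm_lt_top).smul_measure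
      (by simpa using hN.ne')

theorem integral_empiricalMeasure [NormedSpace ℝ F] [CompleteSpace F]
    (g : EuclideanSpace ℝ (Fin n) → F)
    (x : ℕ → EuclideanSpace ℝ (Fin n)) (N : ℕ) :
    ∫ y, g y ∂(empiricalMeasure x N) = (N : ℝ)⁻¹ • ∑ i ∈ Finset.range N, g (x i) := by
  rw [empiricalMeasure, integral_smul_measure,
    integral_finsetSum_measure fun i _ => integrable_dirac enorm_lt_top]
  simp [integral_dirac]

theorem ae_tendsto_integral_empiricalMeasure {Ω : Type*} {mΩ : MeasurableSpace Ω}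
    {P : Measure Ω} {X : ℕ → Ω → EuclideanSpace ℝ (Fin n)} (hXm : ∀ i, Measurable (X i))
    (hindep : Pairwise fun i j => IndepFun (X i) (X j) P)
    {μ : Measure (EuclideanSpace ℝ (Fin n))} (hdist : ∀ i, P.map (X i) = μ)
    {f : EuclideanSpace ℝ (Fin n) → ℝ} (hfm : Measurable f) (hfμ : Integrable f μ) :
    ∀ᵐ ω ∂P, Tendsto (fun N => ∫ y, f y ∂(empiricalMeasure (fun i => X i ω) N)) atTop
      (𝓝 (∫ y, f y ∂μ)) := by
  have hident (i : ℕ) : IdentDistrib (fun ω => f (X i ω)) (fun ω => f (X 0 ω)) P P :=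
    IdentDistrib.comp ⟨(hXm i).aemeasurable, (hXm 0).aemeasurable, by rw [hdist, hdist]⟩ hfm
  have hmean : ∫ ω, f (X 0 ω) ∂P = ∫ y, f y ∂μ := by
    rw [← hdist 0, integral_map (hXm 0).aemeasurable hfm.aestronglyMeasurable]
  have hint : Integrable (fun ω => f (X 0 ω)) P := by
    rw [← hdist 0] at hfμ
    exact hfμ.comp_measurable (hXm 0)
  filter_upwards [strong_law_ae_real _ hint (fun i j hij => (hindep hij).comp hfm hfm) hident]
    with ω hω
  simpa only [integral_empiricalMeasure, Function.comp_apply, smul_eq_mul, inv_mul_eq_div,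
    hmean] using hω

end Empirical

theorem empirical_zonoid_convergence_general {n : ℕ}
    {Ω : Type*} [MeasureSpace Ω]
    (X : ℕ → Ω → EuclideanSpace ℝ (Fin n)) (hXm : ∀ i, Measurable (X i))
    (hindep : iIndepFun X ℙ)
    (μ : Measure (EuclideanSpace ℝ (Fin n)))
    (hdist : ∀ i, Measure.map (X i) ℙ = μ)
    (hμint : Integrable (fun x => x) μ) :
    ∀ᵐ ω ∂(ℙ : Measure Ω),
      Tendsto (fun N => Metric.hausdorffDist
          (zonoid (empiricalMeasure (fun i => X i ω) N)) (zonoid μ)) atTop (𝓝 0) := by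
  obtain ⟨D, hDc, hD⟩ := TopologicalSpace.exists_countable_dense (EuclideanSpace ℝ (Fin n))
  have hslln {f : EuclideanSpace ℝ (Fin n) → ℝ} (hfm : Measurable f) (hfμ : Integrable f μ) :=
    ae_tendsto_integral_empiricalMeasure hXm (fun i j hij => hindep.indepFun hij) hdist hfm hfμ
  have hsupportFun : ∀ᵐ ω ∂(ℙ : Measure Ω), ∀ d ∈ D,
      Tendsto (fun N => zonoidSupportFun (empiricalMeasure (fun i => X i ω) N) d) atTop
        (𝓝 (zonoidSupportFun μ d)) :=
    (ae_ball_iff hDc).2 fun d _ =>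
      hslln ((measurable_const.inner measurable_id).max measurable_const)
        (hμint.const_inner d).pos_part
  filter_upwards [hsupportFun, hslln measurable_norm hμint.norm] with ω hωsupport hωnorm
  exact tendsto_hausdorffDist_zonoid_of_tendsto_dense (fun N => integrable_empiricalMeasure _ _ _)
    hμint hD hωsupport hωnorm

theorem empirical_zonoid_convergence {n : ℕ}
    {Ω : Type*} [MeasureSpace Ω] [IsProbabilityMeasure (ℙ : Measure Ω)]
    (X : ℕ → Ω → EuclideanSpace ℝ (Fin n)) (hXm : ∀ i, Measurable (X i))
    (hindep : iIndepFun X ℙ)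
    (μ : Measure (EuclideanSpace ℝ (Fin n))) [IsProbabilityMeasure μ]
    (hdist : ∀ i, Measure.map (X i) ℙ = μ)
    (hμint : Integrable (fun x => x) μ)
    (hsupp : μ (octant n)ᶜ = 0) :
    ∀ᵐ ω ∂(ℙ : Measure Ω),
      Tendsto (fun N => Metric.hausdorffDist
          (zonoid (empiricalMeasure (fun i => X i ω) N)) (zonoid μ)) atTop (𝓝 0) :=
  empirical_zonoid_convergence_general X hXm hindep μ hdist hμint
end
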